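/- With N, q, and the matrices M_U, M_V, M_W as in the context, let u, v, h be nonzero complex numbers with v^N ≠ −1, and define L_U := (1 + q·M_V(v)⁻¹)⁻¹·(1 + q³·M_V(v)⁻¹)⁻¹·M_U(u), L_V := (1 + q·M_V(v))·(1 + q³·M_V(v))·M_W(u,v,h), and L_W := M_V(v)⁻¹. Then (L_U)^N = (u^N / (1 + v^{−N})²)·I, (L_V)^N = (h^N·(1 + v^N)² / (u^N·v^N))·I, and (L_W)^N = v^{−N}·I, where I is the N×N identity matrix. -/

import Mathlib

/-!
If `G * S = r • (S * G)` with `r` a primitive `n`-th root of unity, then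
`G ^ k * f(S) = f(r ^ k • S) * G ^ k` for every polynomial `f`, hence
`(f(S) * G) ^ n = (∏_{k<n} f(r ^ k • S)) * G ^ n`; for odd `n` this product collapses by
`∏_{k<n} (1 + t r ^ k x) = 1 + t ^ n x ^ n`. Take `r = q ^ 4` and `f = (1 + q X)(1 + q ^ 3 X)`,
with `(S, G) = (M_V, M_W)` for `L_V` and `(S, G) = (M_V⁻¹, M_U)` for `L_U`, where the inverted
factors are the images of `f` under `p ↦ (aeval S p)⁻¹`.
-/

open Matrix

/-- The image of the generator `U` of the Chekhov–Fock algebra of the once-punctured torus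
under the standard representation: the diagonal matrix with entries `u·q^{4i}`. -/
noncomputable def MU (N : ℕ) (q u : ℂ) : Matrix (Fin N) (Fin N) ℂ :=
  Matrix.diagonal fun i => u * q ^ (4 * (i : ℕ))

/-- The image of the generator `V`: the cyclic shift matrix with entries `v`. -/
noncomputable def MV (N : ℕ) (v : ℂ) : Matrix (Fin N) (Fin N) ℂ :=
  Matrix.of fun i j => if (j : ℕ) = ((i : ℕ) + 1) % N then v else 0

/-- The image of the generator `W`: `q⁻²·h·(M_U(u)·M_V(v))⁻¹`. -/
noncomputable def MW (N : ℕ) (q u v h : ℂ) : Matrix (Fin N) (Fin N) ℂ :=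
  ((q ^ 2)⁻¹ * h) • (MU N q u * MV N v)⁻¹

open Polynomial Finset

theorem SemiconjBy.map_prod_mul_pow {M N : Type*} [CommMonoid M] [Monoid N] (φ : M →* N)
    {a : ℕ → M} {g : N} (h : ∀ k, SemiconjBy g (φ (a k)) (φ (a (k + 1)))) (n : ℕ) :
    (φ (a 0) * g) ^ n = φ (∏ k ∈ range n, a k) * g ^ n := by
  have hpow : ∀ n, SemiconjBy (g ^ n) (φ (a 0)) (φ (a n)) := by
    intro n
    induction n with
    | zero => simp
    | succ n ih => simpa [pow_succ'] using (h n).mul_left ih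
  induction n with
  | zero => simp
  | succ n ih =>
    rw [pow_succ, ih, prod_range_succ, map_mul, mul_assoc, ← mul_assoc (g ^ n), (hpow n).eq]
    simp only [mul_assoc, pow_succ]

section Algebra

variable {K A : Type*} [CommRing K] [Ring A] [Algebra K A]

theorem SemiconjBy.aeval_right {G S T : A} (h : SemiconjBy G S T) (p : K[X]) :
    SemiconjBy G (aeval S p) (aeval T p) := by
  induction p using Polynomial.induction_on' with
  | add p q hp hq => simpa using hp.add_right hq
  | monomial k c => simpa [← Algebra.smul_def] using (h.pow_right k).smul_right c

theorem aeval_comp_C_mul_X (S : A) (r : K) (p : K[X]) :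
    aeval S (p.comp (C r * X)) = aeval (r • S) p := by
  simp [aeval_comp, Algebra.smul_def]

theorem SemiconjBy.aeval_comp_C_pow_mul_X {G S : A} {r : K} (h : SemiconjBy G S (r • S))
    (p : K[X]) (k : ℕ) :
    SemiconjBy G (aeval S (p.comp (C (r ^ k) * X))) (aeval S (p.comp (C (r ^ (k + 1)) * X))) := by
  rw [aeval_comp_C_mul_X, aeval_comp_C_mul_X, pow_succ, mul_smul]
  exact (h.smul_right (r ^ k)).aeval_right p

theorem aeval_mul_pow_of_semiconjBy {G S : A} {r : K} (h : SemiconjBy G S (r • S)) (p : K[X])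
    (n : ℕ) : (aeval S p * G) ^ n = aeval S (∏ k ∈ range n, p.comp (C (r ^ k) * X)) * G ^ n := by
  simpa using SemiconjBy.map_prod_mul_pow ((aeval S : K[X] →ₐ[K] A) : K[X] →* A)
    (a := fun k => p.comp (C (r ^ k) * X)) (h.aeval_comp_C_pow_mul_X p) n

theorem aeval_one_add_C_mul_X_mul (S : A) (t₁ t₂ : K) :
    aeval S ((1 + C t₁ * X) * (1 + C t₂ * X)) = (1 + t₁ • S) * (1 + t₂ • S) := by
  simp [Algebra.smul_def]

variable [IsDomain K] {r : K} {n : ℕ}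

theorem IsPrimitiveRoot.prod_one_add_C_mul_X_comp (hr : IsPrimitiveRoot r n) (hn : Odd n)
    (t : K) : ∏ k ∈ range n, (1 + C t * X).comp (C (r ^ k) * X) = 1 + C (t ^ n) * X ^ n := by
  have h := congrArg (eval 1) <|
    X_pow_sub_C_eq_prod (hr.map_of_injective C_injective) hn.pos (α := -(C t * X)) rfl
  simp only [eval_sub, eval_pow, eval_X, eval_C, one_pow, eval_prod, hn.neg_pow] at h
  calc ∏ k ∈ range n, (1 + C t * X).comp (C (r ^ k) * X)
      = ∏ k ∈ range n, (1 - C r ^ k * -(C t * X)) := prod_congr rfl fun k _ => by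
        simp only [add_comp, one_comp, mul_comp, C_comp, X_comp, map_pow]
        ring
    _ = 1 + C (t ^ n) * X ^ n := by rw [← h, C_pow]; ring

theorem IsPrimitiveRoot.aeval_prod_comp_C_mul_X (hr : IsPrimitiveRoot r n) (hn : Odd n) (S : A)
    (t₁ t₂ : K) :
    aeval S (∏ k ∈ range n, ((1 + C t₁ * X) * (1 + C t₂ * X)).comp (C (r ^ k) * X)) =
      (1 + t₁ ^ n • S ^ n) * (1 + t₂ ^ n • S ^ n) := by
  simp only [mul_comp, prod_mul_distrib, hr.prod_one_add_C_mul_X_comp hn]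
  simp [Algebra.smul_def]

theorem one_add_smul_mul_pow_of_semiconjBy (hr : IsPrimitiveRoot r n) (hn : Odd n) {G S : A}
    (h : SemiconjBy G S (r • S)) (t₁ t₂ : K) :
    ((1 + t₁ • S) * (1 + t₂ • S) * G) ^ n =
      (1 + t₁ ^ n • S ^ n) * (1 + t₂ ^ n • S ^ n) * G ^ n := by
  rw [← aeval_one_add_C_mul_X_mul, aeval_mul_pow_of_semiconjBy h,
    hr.aeval_prod_comp_C_mul_X hn]

end Algebra

namespace Matrix

variable {m K : Type*} [Fintype m] [DecidableEq m]

theorem semiconjBy_nonsing_inv_symm_left [CommRing K] {G X Y : Matrix m m K} (hG : IsUnit G.det)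
    (h : SemiconjBy G X Y) : SemiconjBy G⁻¹ Y X := by
  rw [SemiconjBy, ← mul_one (G⁻¹ * Y), ← G.mul_nonsing_inv hG, mul_assoc G⁻¹, ← mul_assoc Y,
    ← h.eq, ← mul_assoc, ← mul_assoc, G.nonsing_inv_mul hG, one_mul]

theorem semiconjBy_nonsing_inv_right [CommRing K] {G X Y : Matrix m m K} (hG : IsUnit G.det)
    (h : SemiconjBy G X Y) : SemiconjBy G X⁻¹ Y⁻¹ := by
  have hY : Y = G * X * G⁻¹ := by rw [h.eq, mul_assoc, G.mul_nonsing_inv hG, mul_one]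
  rw [SemiconjBy, hY, mul_inv_rev, mul_inv_rev, G.nonsing_inv_nonsing_inv hG,
    mul_assoc, mul_assoc, G.nonsing_inv_mul hG, mul_one]

/-- Multiplicative even where `aeval S p` is singular, since `(A * B)⁻¹ = B⁻¹ * A⁻¹` holds for all
square matrices and `K[X]` is commutative. -/
noncomputable def invAeval [CommRing K] (S : Matrix m m K) : K[X] →* Matrix m m K where
  toFun p := (aeval S p)⁻¹
  map_one' := by simp
  map_mul' p q := by rw [mul_comm p, map_mul, mul_inv_rev]

theorem inv_one_add_smul_mul_pow_of_semiconjBy [CommRing K] [IsDomain K] {r : K} {n : ℕ}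
    (hr : IsPrimitiveRoot r n) (hn : Odd n) {G S : Matrix m m K} (hG : IsUnit G.det)
    (h : SemiconjBy G S (r • S)) (t₁ t₂ : K) :
    ((1 + t₁ • S)⁻¹ * (1 + t₂ • S)⁻¹ * G) ^ n =
      ((1 + t₂ ^ n • S ^ n) * (1 + t₁ ^ n • S ^ n))⁻¹ * G ^ n := by
  have key := SemiconjBy.map_prod_mul_pow (invAeval S)
    (a := fun k => ((1 + C t₂ * X) * (1 + C t₁ * X)).comp (C (r ^ k) * X))
    (fun k => semiconjBy_nonsing_inv_right hG (h.aeval_comp_C_pow_mul_X _ k)) n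
  simpa only [invAeval, MonoidHom.coe_mk, OneHom.coe_mk, pow_zero, C_1, one_mul, comp_X,
    aeval_one_add_C_mul_X_mul, mul_inv_rev, hr.aeval_prod_comp_C_mul_X hn] using key

theorem inv_smul_one [Field K] (c : K) : (c • (1 : Matrix m m K))⁻¹ = c⁻¹ • 1 := by
  rcases eq_or_ne c 0 with rfl | hc
  · simp
  · exact inv_eq_left_inv (by rw [smul_mul_smul_comm, inv_mul_cancel₀ hc, one_mul, one_smul])

theorem isUnit_det_of_pow_eq_smul_one [Field K] {A : Matrix m m K} {n : ℕ} {c : K}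
    (hn : n ≠ 0) (hc : c ≠ 0) (h : A ^ n = c • 1) : IsUnit A.det := by
  have := congrArg det h
  rw [det_pow, det_smul, det_one, mul_one] at this
  refine isUnit_iff_ne_zero.mpr fun h0 => pow_ne_zero (Fintype.card m) hc ?_
  rw [← this, h0, zero_pow hn]

end Matrix

theorem prod_range_pow_of_odd {M : Type*} [CommMonoid M] {r : M} {n : ℕ} (hr : r ^ n = 1)
    (hn : Odd n) : ∏ k ∈ range n, r ^ k = 1 := by
  obtain ⟨m, rfl⟩ := hn
  have hsum : ∑ k ∈ range (2 * m + 1), k = (2 * m + 1) * m := by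
    have := sum_range_id_mul_two (2 * m + 1)
    rw [Nat.add_sub_cancel] at this
    linarith
  rw [prod_pow_eq_pow_sum, hsum, pow_mul, hr, one_pow]

theorem MV_pow {N : ℕ} (hN : 0 < N) (v : ℂ) (k : ℕ) :
    MV N v ^ k = of fun i j : Fin N => if (j : ℕ) = (i + k) % N then v ^ k else 0 := by
  induction k with
  | zero =>
    ext i j
    simp [one_apply, Nat.mod_eq_of_lt i.isLt, Fin.ext_iff, eq_comm]
  | succ k ih =>
    rw [pow_succ, ih]
    ext i j
    have hl : ∀ l : Fin N, (l : ℕ) = (i + k) % N ↔ l = ⟨(i + k) % N, Nat.mod_lt _ hN⟩ :=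
      fun l => by rw [Fin.ext_iff]
    simp only [mul_apply, of_apply, MV, hl, ite_mul, zero_mul, sum_ite_eq', mem_univ, if_true]
    simp only [Nat.mod_add_mod, add_assoc, mul_ite, mul_zero, pow_succ]

theorem MV_pow_self {N : ℕ} (hN : 0 < N) (v : ℂ) : MV N v ^ N = v ^ N • 1 := by
  ext i j
  simp [MV_pow hN, one_apply, Nat.mod_eq_of_lt i.isLt, Fin.ext_iff, eq_comm]

theorem MU_pow_self {N : ℕ} {q : ℂ} (hq : IsPrimitiveRoot q N) (u : ℂ) :
    MU N q u ^ N = u ^ N • 1 := by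
  rw [MU, diagonal_pow, smul_one_eq_diagonal]
  congr 1
  ext i
  rw [Pi.pow_apply, mul_pow, ← pow_mul, mul_comm (4 * _) N, pow_mul, hq.pow_eq_one, one_pow,
    mul_one]

theorem semiconjBy_MV_MU {N : ℕ} {q : ℂ} (hq : IsPrimitiveRoot q N) (u v : ℂ) :
    SemiconjBy (MV N v) (MU N q u) (q ^ 4 • MU N q u) := by
  have hmod (a : ℕ) : q ^ (a % N) = q ^ a := by simpa [← hq.eq_orderOf] using pow_mod_orderOf q a
  ext i j
  simp only [MV, MU, Matrix.smul_mul, mul_diagonal, diagonal_mul, of_apply, Matrix.smul_apply,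
    smul_eq_mul]
  split_ifs with hj
  · rw [hj, mul_comm 4, pow_mul, hmod]
    ring
  · simp

theorem MU_mul_MV_pow_self {N : ℕ} (hN : Odd N) {q : ℂ} (hq : IsPrimitiveRoot q N) (u v : ℂ) :
    (MU N q u * MV N v) ^ N = (u ^ N * v ^ N) • 1 := by
  have hq4N : (q ^ 4) ^ N = 1 := by rw [← pow_mul, mul_comm, pow_mul, hq.pow_eq_one, one_pow]
  have h := aeval_mul_pow_of_semiconjBy (semiconjBy_MV_MU hq u v) X N
  simp only [aeval_X, X_comp, prod_mul_distrib, prod_const, card_range] at h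
  rw [← map_prod, prod_range_pow_of_odd hq4N hN, C_1, one_mul, map_pow, aeval_X] at h
  rw [h, MU_pow_self hq, MV_pow_self hN.pos, smul_mul_smul_comm, one_mul]

theorem semiconjBy_MU_inv_MV {N : ℕ} {q : ℂ} (hq : IsPrimitiveRoot q N) (u : ℂ) {v : ℂ}
    (hv : IsUnit (MV N v).det) : SemiconjBy (MU N q u) (MV N v)⁻¹ (q ^ 4 • (MV N v)⁻¹) := by
  have h := semiconjBy_nonsing_inv_symm_left hv (semiconjBy_MV_MU hq u v)
  rw [SemiconjBy, smul_mul_assoc, ← h.eq, mul_smul_comm]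

theorem semiconjBy_MW_MV {N : ℕ} {q u v : ℂ} (hq : IsPrimitiveRoot q N)
    (huv : IsUnit (MU N q u * MV N v).det) (h : ℂ) :
    SemiconjBy (MW N q u v h) (MV N v) (q ^ 4 • MV N v) := by
  have hVUV : SemiconjBy (MU N q u * MV N v) (q ^ 4 • MV N v) (MV N v) := by
    rw [SemiconjBy, ← mul_assoc, (semiconjBy_MV_MU hq u v).eq, mul_smul_comm, smul_mul_assoc,
      smul_mul_assoc, mul_assoc]
  exact (semiconjBy_nonsing_inv_symm_left huv hVUV).smul_left _

theorem MW_pow_self {N : ℕ} (hN : Odd N) {q : ℂ} (hq : IsPrimitiveRoot q N) (u v h : ℂ) :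
    MW N q u v h ^ N = (h ^ N * (u ^ N * v ^ N)⁻¹) • 1 := by
  rw [MW, _root_.smul_pow, inv_pow', MU_mul_MV_pow_self hN hq, inv_smul_one, smul_smul, mul_pow,
    inv_pow, ← pow_mul, mul_comm 2 N, pow_mul, hq.pow_eq_one, one_pow, inv_one, one_mul]

theorem stmt11_general (N : ℕ) (hN : Odd N) (q : ℂ) (hq : IsPrimitiveRoot q N)
    (u v h : ℂ) (hu : u ≠ 0) (hv : v ≠ 0)
    (LU LV LW : Matrix (Fin N) (Fin N) ℂ)
    (hLU : LU = (1 + q • (MV N v)⁻¹)⁻¹ * (1 + q ^ 3 • (MV N v)⁻¹)⁻¹ * MU N q u)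
    (hLV : LV = (1 + q • MV N v) * (1 + q ^ 3 • MV N v) * MW N q u v h)
    (hLW : LW = (MV N v)⁻¹) :
    LU ^ N = (u ^ N / (1 + (v ^ N)⁻¹) ^ 2) • (1 : Matrix (Fin N) (Fin N) ℂ) ∧
    LV ^ N = (h ^ N * (1 + v ^ N) ^ 2 / (u ^ N * v ^ N)) • (1 : Matrix (Fin N) (Fin N) ℂ) ∧
    LW ^ N = (v ^ N)⁻¹ • (1 : Matrix (Fin N) (Fin N) ℂ) := by
  have hq4 : IsPrimitiveRoot (q ^ 4) N :=
    hq.pow_of_coprime 4 (by simpa using (Nat.coprime_two_left.mpr hN).pow_left 2)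
  have hq3 : (q ^ 3) ^ N = 1 := by rw [← pow_mul, mul_comm, pow_mul, hq.pow_eq_one, one_pow]
  have hUN := MU_pow_self hq u
  have hVN := MV_pow_self hN.pos v
  have hU := isUnit_det_of_pow_eq_smul_one hN.pos.ne' (pow_ne_zero N hu) hUN
  have hV := isUnit_det_of_pow_eq_smul_one hN.pos.ne' (pow_ne_zero N hv) hVN
  have hUV : IsUnit (MU N q u * MV N v).det := by rw [det_mul]; exact hU.mul hV
  have hVinvN : (MV N v)⁻¹ ^ N = (v ^ N)⁻¹ • 1 := by rw [inv_pow', hVN, inv_smul_one]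
  have hscalar (c : ℂ) : (1 : Matrix (Fin N) (Fin N) ℂ) + (1 : ℂ) • c • 1 = (1 + c) • 1 := by
    rw [one_smul, add_smul, one_smul]
  refine ⟨?_, ?_, by rw [hLW, hVinvN]⟩
  · rw [hLU, inv_one_add_smul_mul_pow_of_semiconjBy hq4 hN hU (semiconjBy_MU_inv_MV hq u hV),
      hVinvN, hUN, hq.pow_eq_one, hq3]
    simp only [hscalar, smul_mul_smul_comm, one_mul, inv_smul_one]
    congr 1
    ring
  · rw [hLV, one_add_smul_mul_pow_of_semiconjBy hq4 hN (semiconjBy_MW_MV hq hUV h), hVN,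
      MW_pow_self hN hq, hq.pow_eq_one, hq3]
    simp only [hscalar, smul_mul_smul_comm, one_mul]
    congr 1
    ring

/-- The `N`-th powers of the images `L_U, L_V, L_W` of `U, V, W` under `χ_{u,v,h} ∘ ℒ`
are the scalar matrices `u^N/(1+v^{−N})²`, `h^N (1+v^N)²/(u^N v^N)`, and `v^{−N}`. -/
theorem stmt11 (N : ℕ) (hN : Odd N) (hNpos : 0 < N) (q : ℂ) (hq : IsPrimitiveRoot q N)
    (u v h : ℂ) (hu : u ≠ 0) (hv : v ≠ 0) (hh : h ≠ 0) (hvn : v ^ N ≠ -1)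
    (LU LV LW : Matrix (Fin N) (Fin N) ℂ)
    (hLU : LU = (1 + q • (MV N v)⁻¹)⁻¹ * (1 + q ^ 3 • (MV N v)⁻¹)⁻¹ * MU N q u)
    (hLV : LV = (1 + q • MV N v) * (1 + q ^ 3 • MV N v) * MW N q u v h)
    (hLW : LW = (MV N v)⁻¹) :
    LU ^ N = (u ^ N / (1 + (v ^ N)⁻¹) ^ 2) • (1 : Matrix (Fin N) (Fin N) ℂ) ∧
    LV ^ N = (h ^ N * (1 + v ^ N) ^ 2 / (u ^ N * v ^ N)) • (1 : Matrix (Fin N) (Fin N) ℂ) ∧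
    LW ^ N = (v ^ N)⁻¹ • (1 : Matrix (Fin N) (Fin N) ℂ) :=
  stmt11_general N hN q hq u v h hu hv LU LV LW hLU hLV hLW
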